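/- Let F be the free (noncommutative) ring on two generators α and β. If a subring S of F contains all elements w + w^γ for words w of length at most k (where γ swaps the generators) and is generated as a ring by such elements, then S is a proper subring of F^{ℤ/2}: the invariant subalgebra F^{ℤ/2} is not generated by its elements of degree at most k, for any k ≥ 1. -/

import Mathlib

/-!
Let `ε(α) = 1`, `ε(β) = -1`, and let `Φₙ` be the linear functional sending a word `w` of length `n`
to `ε(first letter of w) · ε(last letter of w)` and every other word to `0`. Replacing a nonempty
suffix `v` of a word by `v^γ` changes the sign of `Φₙ` as long as the prefix is nonempty, so `Φₙ`
kills `F · (v + v^γ)` whenever `1 ≤ |v| < n`; it also kills `1`. Since `2 = 1 + 1^γ` is a scalar,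
`ker Φₙ` is stable under right multiplication by all generators `w + w^γ` with `|w| < n`, hence
contains the subalgebra they generate. For `n = k + 1` this subalgebra therefore misses the
invariant `α^(k+1) + β^(k+1)`, on which `Φₙ` equals `2`.
-/

/-- The swap automorphism of `F = ℂ⟨α, β⟩`. -/
noncomputable def swapAlg : FreeAlgebra ℂ (Fin 2) →ₐ[ℂ] FreeAlgebra ℂ (Fin 2) :=
  FreeAlgebra.lift ℂ fun i => FreeAlgebra.ι ℂ (1 - i)

/-- The letter-swap on words. -/
def swapWord : FreeMonoid (Fin 2) →* FreeMonoid (Fin 2) :=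
  FreeMonoid.map fun i => 1 - i

/-- Interpretation of a word as a product of generators. -/
noncomputable def wordToAlg : FreeMonoid (Fin 2) →* FreeAlgebra ℂ (Fin 2) :=
  FreeMonoid.lift (FreeAlgebra.ι ℂ)

/-- `w* = w + w^γ`. -/
noncomputable def wStar (w : FreeMonoid (Fin 2)) : FreeAlgebra ℂ (Fin 2) :=
  wordToAlg w + wordToAlg (swapWord w)

theorem Algebra.adjoin_subset_of_one_mem_of_mul_mem {R A : Type*} [CommSemiring R] [Semiring A]
    [Algebra R A] {S : Set A} {V : Submodule R A} (h1 : (1 : A) ∈ V)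
    (hS : ∀ s ∈ S, ∀ y ∈ V, y * s ∈ V) :
    (Algebra.adjoin R S : Set A) ⊆ V := by
  intro x hx
  suffices ∀ y ∈ V, y * x ∈ V by simpa using this 1 h1
  induction hx using Algebra.adjoin_induction with
  | mem s hs => exact hS s hs
  | algebraMap r =>
    exact fun y hy => by simpa [← Algebra.commutes, ← Algebra.smul_def] using V.smul_mem r hy
  | add x x' _ _ hx hx' => exact fun y hy => by simpa [mul_add] using V.add_mem (hx y hy) (hx' y hy)
  | mul x x' _ _ hx hx' => exact fun y hy => by simpa [mul_assoc] using hx' _ (hx y hy)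

def letterSign (i : Fin 2) : ℂ := if i = 0 then 1 else -1

lemma letterSign_one_sub (i : Fin 2) : letterSign (1 - i) = -letterSign i := by
  fin_cases i <;> norm_num [letterSign]

def endSign (l : List (Fin 2)) : ℂ := letterSign (l.headD 0) * letterSign (l.getLastD 0)

lemma endSign_append_map_one_sub {w v : List (Fin 2)} (hw : w ≠ []) (hv : v ≠ []) :
    endSign (w ++ v.map (1 - ·)) = -endSign (w ++ v) := by
  obtain ⟨a, w, rfl⟩ := List.exists_cons_of_ne_nil hw
  obtain ⟨v, b, rfl⟩ := v.eq_nil_or_concat.resolve_left hv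
  simp only [endSign, List.getLastD_eq_getLast?, List.getLast?_append]
  simp [letterSign_one_sub]

lemma toList_swapWord (w : FreeMonoid (Fin 2)) :
    (swapWord w).toList = w.toList.map (1 - ·) := rfl

lemma swapWord_swapWord (w : FreeMonoid (Fin 2)) : swapWord (swapWord w) = w :=
  FreeMonoid.toList.injective <| by simp [toList_swapWord]

lemma swapAlg_wordToAlg (w : FreeMonoid (Fin 2)) :
    swapAlg (wordToAlg w) = wordToAlg (swapWord w) := by
  induction w using FreeMonoid.inductionOn' with
  | one => simp
  | of_mul x w ih =>
    rw [map_mul, map_mul, map_mul, ih]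
    simp [wordToAlg, swapWord, swapAlg]

lemma swapAlg_wStar (w : FreeMonoid (Fin 2)) : swapAlg (wStar w) = wStar w := by
  rw [wStar, map_add, swapAlg_wordToAlg, swapAlg_wordToAlg, swapWord_swapWord, add_comm]

lemma wStar_one : wStar 1 = 2 := by
  simp only [wStar, map_one, one_add_one_eq_two]

noncomputable def endSignFunctional (n : ℕ) : FreeAlgebra ℂ (Fin 2) →ₗ[ℂ] ℂ :=
  (FreeAlgebra.basisFreeMonoid ℂ (Fin 2)).constr ℂ fun w =>
    if w.toList.length = n then endSign w.toList else 0

lemma basisFreeMonoid_eq_wordToAlg (w : FreeMonoid (Fin 2)) :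
    FreeAlgebra.basisFreeMonoid ℂ (Fin 2) w = wordToAlg w := by
  simp [FreeAlgebra.basisFreeMonoid, FreeAlgebra.equivMonoidAlgebraFreeMonoid, wordToAlg]

lemma endSignFunctional_wordToAlg (n : ℕ) (w : FreeMonoid (Fin 2)) :
    endSignFunctional n (wordToAlg w) = if w.toList.length = n then endSign w.toList else 0 := by
  rw [← basisFreeMonoid_eq_wordToAlg, endSignFunctional, Module.Basis.constr_basis]

lemma endSignFunctional_one {n : ℕ} (hn : n ≠ 0) : endSignFunctional n 1 = 0 := by
  simpa [hn.symm] using endSignFunctional_wordToAlg n 1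

lemma endSignFunctional_mul_wStar {n : ℕ} {v : FreeMonoid (Fin 2)} (hv : v ≠ 1)
    (hvn : v.toList.length < n) (a : FreeAlgebra ℂ (Fin 2)) :
    endSignFunctional n (a * wStar v) = 0 := by
  suffices (endSignFunctional n).comp (LinearMap.mulRight ℂ (wStar v)) = 0 from
    LinearMap.congr_fun this a
  refine (FreeAlgebra.basisFreeMonoid ℂ (Fin 2)).ext fun w => ?_
  have hv' : v.toList ≠ [] := fun h => hv (FreeMonoid.toList.injective h)
  rw [basisFreeMonoid_eq_wordToAlg, LinearMap.comp_apply, LinearMap.mulRight_apply, wStar, mul_add,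
    ← map_mul, ← map_mul, map_add, endSignFunctional_wordToAlg, endSignFunctional_wordToAlg]
  simp only [FreeMonoid.toList_mul, toList_swapWord, List.length_append, List.length_map]
  split_ifs with hlen
  · have hw : w.toList ≠ [] := by rintro h; simp [h] at hlen; omega
    rw [endSign_append_map_one_sub hw hv', add_neg_cancel, LinearMap.zero_apply]
  · rw [add_zero, LinearMap.zero_apply]

lemma mul_wStar_mem_ker {n : ℕ} {v : FreeMonoid (Fin 2)} (hvn : v.toList.length < n)
    {y : FreeAlgebra ℂ (Fin 2)} (hy : y ∈ LinearMap.ker (endSignFunctional n)) :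
    y * wStar v ∈ LinearMap.ker (endSignFunctional n) := by
  rcases eq_or_ne v 1 with rfl | hv
  · simpa [wStar_one, mul_two] using add_mem hy hy
  · exact endSignFunctional_mul_wStar hv hvn y

lemma endSign_replicate {n : ℕ} (hn : n ≠ 0) (a : Fin 2) : endSign (List.replicate n a) = 1 := by
  simp only [endSign, List.getLastD_eq_getLast?, List.getLast?_replicate, List.headD_eq_head?,
    List.head?_replicate, hn, if_false, Option.getD_some]
  fin_cases a <;> norm_num [letterSign]

lemma endSignFunctional_wStar_replicate {n : ℕ} (hn : n ≠ 0) :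
    endSignFunctional n (wStar (FreeMonoid.ofList (List.replicate n 0))) = 2 := by
  rw [wStar, map_add, endSignFunctional_wordToAlg, endSignFunctional_wordToAlg]
  simp only [FreeMonoid.toList_ofList, toList_swapWord, List.map_replicate, sub_zero,
    List.length_replicate, if_true, endSign_replicate hn]
  exact one_add_one_eq_two

theorem stmt4_general (k : ℕ) :
    Algebra.adjoin ℂ
        {x : FreeAlgebra ℂ (Fin 2) | ∃ w : FreeMonoid (Fin 2),
          (FreeMonoid.toList w).length ≤ k ∧ x = wStar w} <
      AlgHom.equalizer swapAlg (AlgHom.id ℂ (FreeAlgebra ℂ (Fin 2))) := by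
  have hinv (w : FreeMonoid (Fin 2)) :
      wStar w ∈ AlgHom.equalizer swapAlg (AlgHom.id ℂ (FreeAlgebra ℂ (Fin 2))) :=
    swapAlg_wStar w
  set u := FreeMonoid.ofList (List.replicate (k + 1) (0 : Fin 2))
  refine SetLike.lt_iff_le_and_exists.2 ⟨Algebra.adjoin_le ?_, wStar u, hinv u, fun hu => ?_⟩
  · rintro _ ⟨w, -, rfl⟩
    exact hinv w
  have hker := Algebra.adjoin_subset_of_one_mem_of_mul_mem (endSignFunctional_one k.succ_ne_zero)
    (by rintro _ ⟨w, hw, rfl⟩ y hy; exact mul_wStar_mem_ker (Nat.lt_succ_of_le hw) hy) hu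
  rw [SetLike.mem_coe, LinearMap.mem_ker, endSignFunctional_wStar_replicate k.succ_ne_zero] at hker
  exact two_ne_zero hker

/-- For every `k ≥ 1`, the subalgebra generated by the elements `w + w^γ` for words `w` of
length at most `k` is a *proper* subalgebra of the fixed subalgebra `F^{ℤ/2}`: the invariant
subalgebra is not generated by its elements of degree at most `k`. -/
theorem stmt4 (k : ℕ) (hk : 1 ≤ k) :
    Algebra.adjoin ℂ
        {x : FreeAlgebra ℂ (Fin 2) | ∃ w : FreeMonoid (Fin 2),
          (FreeMonoid.toList w).length ≤ k ∧ x = wStar w} <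
      AlgHom.equalizer swapAlg (AlgHom.id ℂ (FreeAlgebra ℂ (Fin 2))) :=
  stmt4_general k
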